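/- arXiv:1005.3739 — 2 statements merged into one kernel-verified Lean document; each statement's English description precedes it below -/
import Mathlib

section
/- Let K be a convex body with 0 in its interior, r_0 and r_1 the minimum and maximum of the radial function over the unit sphere, and t > 0. Then for every unit vector u, ρ(K + tB^n, u) ≤ ρ(K, u) + (r_1/r_0)·t. -/
open MeasureTheory Filter
open scoped RealInnerProductSpace Topology Pointwise

noncomputable def polarBody {n : ℕ} (K : Set (EuclideanSpace ℝ (Fin n))) :
    Set (EuclideanSpace ℝ (Fin n)) :=
  {x | ∀ y ∈ K, ⟪x, y⟫ ≤ 1}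

noncomputable def suppFn {n : ℕ} (K : Set (EuclideanSpace ℝ (Fin n)))
    (u : EuclideanSpace ℝ (Fin n)) : ℝ :=
  sSup ((fun x => ⟪u, x⟫) '' K)

noncomputable def radFn {n : ℕ} (K : Set (EuclideanSpace ℝ (Fin n)))
    (u : EuclideanSpace ℝ (Fin n)) : ℝ :=
  sSup {r : ℝ | 0 ≤ r ∧ r • u ∈ K}

/-!
If `r₀ = min ρ(K, ·)`, then `r₀ B ⊆ K`, so by convexity
`K + t B ⊆ K + (t / r₀) K = (1 + t / r₀) K`. The radial function is homogeneous and monotone,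
hence `ρ(K + t B, u) ≤ (1 + t / r₀) ρ(K, u) ≤ ρ(K, u) + (t / r₀) r₁`.
-/

open Metric Set

theorem add_closedBall_subset_smul {E : Type*} [NormedAddCommGroup E] [NormedSpace ℝ E]
    {K : Set E} (hconv : Convex ℝ K) {r t : ℝ} (hr : 0 < r) (ht : 0 ≤ t)
    (hball : closedBall (0 : E) r ⊆ K) : K + closedBall 0 t ⊆ (1 + t / r) • K := by
  rw [hconv.add_smul zero_le_one (div_nonneg ht hr.le), one_smul]
  refine add_subset_add_left ?_
  calc closedBall (0 : E) t = (t / r) • closedBall (0 : E) r := by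
        rw [smul_closedBall _ _ hr.le, smul_zero, Real.norm_of_nonneg (div_nonneg ht hr.le),
          div_mul_cancel₀ _ hr.ne']
    _ ⊆ (t / r) • K := smul_set_mono hball

section RadialFunction

variable {n : ℕ} {K L : Set (EuclideanSpace ℝ (Fin n))} {u v : EuclideanSpace ℝ (Fin n)}

theorem radFn_nonneg : 0 ≤ radFn K u :=
  Real.sSup_nonneg fun _ hr => hr.1

theorem bddAbove_radSet (hK : Bornology.IsBounded K) (hu : u ≠ 0) :
    BddAbove {r : ℝ | 0 ≤ r ∧ r • u ∈ K} := by
  obtain ⟨R, hR⟩ := hK.exists_norm_le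
  refine ⟨R / ‖u‖, fun r ⟨hr, hrK⟩ => ?_⟩
  rw [le_div_iff₀ (norm_pos_iff.mpr hu)]
  simpa [norm_smul, abs_of_nonneg hr] using hR _ hrK

theorem le_radFn (hK : Bornology.IsBounded K) (hu : u ≠ 0) {r : ℝ} (hr : 0 ≤ r)
    (hrK : r • u ∈ K) : r ≤ radFn K u :=
  le_csSup (bddAbove_radSet hK hu) ⟨hr, hrK⟩

theorem radFn_smul_mem (hK : IsCompact K) (h0 : 0 ∈ K) (hu : u ≠ 0) : radFn K u • u ∈ K := by
  have hclosed : IsClosed {r : ℝ | 0 ≤ r ∧ r • u ∈ K} :=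
    isClosed_Ici.inter (hK.isClosed.preimage (continuous_id.smul continuous_const))
  exact (hclosed.csSup_mem ⟨0, le_rfl, by simpa using h0⟩ (bddAbove_radSet hK.isBounded hu)).2

theorem radFn_le_mul_of_subset_smul (hK : Bornology.IsBounded K) (hu : u ≠ 0) {c : ℝ}
    (hc : 0 < c) (hL : L ⊆ c • K) : radFn L u ≤ c * radFn K u := by
  refine Real.sSup_le (fun r ⟨hr, hrL⟩ => ?_) (mul_nonneg hc.le radFn_nonneg)
  obtain ⟨k, hk, hkr⟩ := hL hrL
  have hk' : (r / c) • u = k := by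
    rw [div_eq_inv_mul, mul_smul, ← hkr, inv_smul_smul₀ hc.ne']
  have := le_radFn hK hu (div_nonneg hr hc.le) (hk' ▸ hk)
  rwa [div_le_iff₀' hc] at this

theorem le_radFn_of_closedBall_subset (hK : Bornology.IsBounded K) {ε : ℝ} (hε : 0 ≤ ε)
    (hball : closedBall 0 ε ⊆ K) (hv : ‖v‖ = 1) : ε ≤ radFn K v :=
  le_radFn hK (ne_zero_of_norm_ne_zero (by simp [hv])) hε
    (hball (by simp [norm_smul, hv, abs_of_nonneg hε]))

theorem closedBall_subset_of_le_radFn (hK : IsCompact K) (hconv : Convex ℝ K) (h0 : 0 ∈ K)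
    {r : ℝ} (hr : ∀ v, ‖v‖ = 1 → r ≤ radFn K v) : closedBall 0 r ⊆ K := by
  intro w hw
  rw [mem_closedBall_zero_iff] at hw
  rcases eq_or_ne w 0 with rfl | hw0
  · exact h0
  have hnw : 0 < ‖w‖ := norm_pos_iff.mpr hw0
  have hv : ‖‖w‖⁻¹ • w‖ = 1 := norm_smul_inv_norm hw0
  have hρ : ‖w‖ ≤ radFn K (‖w‖⁻¹ • w) := hw.trans (hr _ hv)
  have hρpos := hnw.trans_le hρ
  have hmem := hconv.smul_mem_of_zero_mem h0
    (radFn_smul_mem hK h0 (smul_ne_zero (inv_ne_zero hnw.ne') hw0))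
    ⟨div_nonneg hnw.le hρpos.le, (div_le_one hρpos).2 hρ⟩
  rwa [smul_smul, div_mul_cancel₀ _ hρpos.ne', smul_inv_smul₀ hnw.ne'] at hmem

theorem sInf_radFn_sphere_le (hv : ‖v‖ = 1) : sInf (radFn K '' sphere 0 1) ≤ radFn K v :=
  csInf_le ⟨0, forall_mem_image.2 fun _ _ => radFn_nonneg⟩
    (mem_image_of_mem _ (by simpa using hv))

theorem le_sSup_radFn_sphere (hK : Bornology.IsBounded K) (hv : ‖v‖ = 1) :
    radFn K v ≤ sSup (radFn K '' sphere 0 1) := by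
  obtain ⟨R, hR, hKR⟩ := hK.exists_pos_norm_le
  refine le_csSup ⟨R, forall_mem_image.2 fun w hw => Real.sSup_le (fun r ⟨hr, hrK⟩ => ?_) hR.le⟩
    (mem_image_of_mem _ (by simpa using hv))
  simpa [norm_smul, abs_of_nonneg hr, mem_sphere_zero_iff_norm.mp hw] using hKR _ hrK

theorem sInf_radFn_sphere_pos (hK : Bornology.IsBounded K) (h0 : 0 ∈ interior K)
    (hu : ‖u‖ = 1) : 0 < sInf (radFn K '' sphere 0 1) := by
  obtain ⟨ε, hε, hball⟩ := nhds_basis_closedBall.mem_iff.mp (mem_interior_iff_mem_nhds.mp h0)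
  refine hε.trans_le (le_csInf ⟨_, mem_image_of_mem _ (by simpa using hu)⟩ ?_)
  exact forall_mem_image.2 fun v hv =>
    le_radFn_of_closedBall_subset hK hε.le hball (mem_sphere_zero_iff_norm.mp hv)

end RadialFunction

theorem rad_add_ball_le {n : ℕ} (K : Set (EuclideanSpace ℝ (Fin n)))
    (hK : IsCompact K) (hconv : Convex ℝ K)
    (h0 : (0 : EuclideanSpace ℝ (Fin n)) ∈ interior K)
    (r₀ r₁ : ℝ)
    (hr₀ : r₀ = sInf (radFn K '' Metric.sphere (0 : EuclideanSpace ℝ (Fin n)) 1))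
    (hr₁ : r₁ = sSup (radFn K '' Metric.sphere (0 : EuclideanSpace ℝ (Fin n)) 1))
    (t : ℝ) (ht : 0 < t)
    (u : EuclideanSpace ℝ (Fin n)) (hu : ‖u‖ = 1) :
    radFn (K + Metric.closedBall (0 : EuclideanSpace ℝ (Fin n)) t) u ≤
      radFn K u + (r₁ / r₀) * t := by
  have hu0 : u ≠ 0 := ne_zero_of_norm_ne_zero (by simp [hu])
  have hr₀_pos : 0 < r₀ := hr₀ ▸ sInf_radFn_sphere_pos hK.isBounded h0 hu
  have hball : closedBall 0 r₀ ⊆ K := closedBall_subset_of_le_radFn hK hconv (interior_subset h0)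
    fun v hv => hr₀ ▸ sInf_radFn_sphere_le hv
  have hu_le_r₁ : radFn K u ≤ r₁ := hr₁ ▸ le_sSup_radFn_sphere hK.isBounded hu
  calc radFn (K + closedBall 0 t) u ≤ (1 + t / r₀) * radFn K u :=
        radFn_le_mul_of_subset_smul hK.isBounded hu0 (by positivity)
          (add_closedBall_subset_smul hconv hr₀_pos ht.le hball)
    _ = radFn K u + t / r₀ * radFn K u := by ring
    _ ≤ radFn K u + t / r₀ * r₁ := by gcongr
    _ = radFn K u + r₁ / r₀ * t := by ring
end

section
/- Let x₀, y₀ > 0 with x₀² + y₀² = 1, and let D be the area of the circular segment of the unit disk cut off by the chord from (x₀, y₀) to (x₀, −y₀) (the segment on the side of larger x). Then D ≤ 2y₀(1 − x₀) and 2x₀y₀³ ≥ D(1 − 2y₀²). -/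
open MeasureTheory Filter
open scoped RealInnerProductSpace Topology

theorem circular_segment_inequality (x₀ y₀ : ℝ) (hx : 0 < x₀) (hy : 0 < y₀)
    (h : x₀ ^ 2 + y₀ ^ 2 = 1)
    (D : ℝ)
    (hD : D = (volume {p : EuclideanSpace ℝ (Fin 2) | ‖p‖ ≤ 1 ∧ x₀ ≤ p 0}).toReal) :
    D ≤ 2 * y₀ * (1 - x₀) ∧ 2 * x₀ * y₀ ^ 3 ≥ D * (1 - 2 * y₀ ^ 2) := by
  have hx1 : x₀ ≤ 1 := by nlinarith
  set R : Set (Fin 2 → ℝ) :=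
    Set.univ.pi fun i => if i = 0 then Set.Icc x₀ 1 else Set.Icc (-y₀) y₀ with hR
  have hsub : {p : EuclideanSpace ℝ (Fin 2) | ‖p‖ ≤ 1 ∧ x₀ ≤ p 0} ⊆
      (MeasurableEquiv.toLp 2 (Fin 2 → ℝ)).symm ⁻¹' R := by
    rintro p ⟨hp1, hp2⟩
    have hsq : p 0 ^ 2 + p 1 ^ 2 ≤ 1 := by
      have hn := EuclideanSpace.norm_eq p
      rw [Fin.sum_univ_two] at hn
      have h0 : (0:ℝ) ≤ ‖p 0‖ ^ 2 + ‖p 1‖ ^ 2 := by positivity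
      have := Real.sq_sqrt h0
      have habs0 : ‖p 0‖ ^ 2 = p 0 ^ 2 := by rw [Real.norm_eq_abs, sq_abs]
      have habs1 : ‖p 1‖ ^ 2 = p 1 ^ 2 := by rw [Real.norm_eq_abs, sq_abs]
      nlinarith [Real.sqrt_nonneg (‖p 0‖ ^ 2 + ‖p 1‖ ^ 2)]
    intro i _
    fin_cases i
    · show p 0 ∈ if (0 : Fin 2) = 0 then Set.Icc x₀ 1 else Set.Icc (-y₀) y₀
      rw [if_pos rfl]
      exact ⟨hp2, by nlinarith [sq_nonneg (p 1)]⟩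
    · show p 1 ∈ if (1 : Fin 2) = 0 then Set.Icc x₀ 1 else Set.Icc (-y₀) y₀
      rw [if_neg (by decide)]
      have hp0 : x₀ ^ 2 ≤ p 0 ^ 2 := by
        nlinarith [mul_nonneg (sub_nonneg.mpr hp2) (by linarith : (0:ℝ) ≤ p 0 + x₀)]
      exact ⟨by nlinarith [sq_nonneg (p 1 + y₀)], by nlinarith [sq_nonneg (p 1 - y₀)]⟩
  have hRvol : volume ((MeasurableEquiv.toLp 2 (Fin 2 → ℝ)).symm ⁻¹' R)
      = ENNReal.ofReal (1 - x₀) * ENNReal.ofReal (2 * y₀) := by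
    have hRmeas : MeasurableSet R := by
      rw [hR]
      exact MeasurableSet.univ_pi fun i => by split <;> exact measurableSet_Icc
    rw [(EuclideanSpace.volume_preserving_symm_measurableEquiv_toLp (Fin 2)).measure_preimage
      hRmeas.nullMeasurableSet]
    rw [hR, volume_pi_pi]
    rw [Fin.prod_univ_two]
    simp [Real.volume_Icc]
    ring_nf
    rw [ENNReal.ofReal_mul' (by norm_num), ENNReal.ofReal_ofNat]
    ring
  have hmono := measure_mono (μ := (volume : Measure (EuclideanSpace ℝ (Fin 2)))) hsub
  rw [hRvol] at hmono
  have hfin : ENNReal.ofReal (1 - x₀) * ENNReal.ofReal (2 * y₀) ≠ ⊤ := by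
    exact ENNReal.mul_ne_top ENNReal.ofReal_ne_top ENNReal.ofReal_ne_top
  have hDle : D ≤ 2 * y₀ * (1 - x₀) := by
    rw [hD]
    calc (volume {p : EuclideanSpace ℝ (Fin 2) | ‖p‖ ≤ 1 ∧ x₀ ≤ p 0}).toReal
        ≤ (ENNReal.ofReal (1 - x₀) * ENNReal.ofReal (2 * y₀)).toReal :=
          ENNReal.toReal_mono hfin hmono
      _ = (1 - x₀) * (2 * y₀) := by
          rw [ENNReal.toReal_mul, ENNReal.toReal_ofReal (by linarith),
            ENNReal.toReal_ofReal (by linarith)]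
      _ = 2 * y₀ * (1 - x₀) := by ring
  have hD0 : 0 ≤ D := hD ▸ ENNReal.toReal_nonneg
  refine ⟨hDle, ?_⟩
  rcases le_or_gt (1 - 2 * y₀ ^ 2) 0 with hc | hc
  · have : D * (1 - 2 * y₀ ^ 2) ≤ 0 := mul_nonpos_of_nonneg_of_nonpos hD0 hc
    have hpos : 0 ≤ 2 * x₀ * y₀ ^ 3 := by positivity
    linarith
  · have h1 : D * (1 - 2 * y₀ ^ 2) ≤ 2 * y₀ * (1 - x₀) * (1 - 2 * y₀ ^ 2) :=
      mul_le_mul_of_nonneg_right hDle hc.le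
    nlinarith [mul_pos hy (mul_pos hx hy)]
end
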